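/- Let λ > −1/2, α > 0, 0 < β < α, δ > 0, and set γ = √(α² − β²). Then δβK_{λ+1}(δγ)/(γK_λ(δγ)) < (β/γ²)·[λ + 1/2 + √((λ + 1/2)² + δ²γ²)]. Equality holds if λ = −1/2 and the inequality is reversed for λ < −1/2. -/

import Mathlib

/-!
Write `P = K_{ν+1}(x)`, `Q = K_ν(x)` and `μ = ν + 1/2`. The inequality `x P < (μ + √(μ² + x²)) Q`
says that `P / Q` lies below the positive root of `x r² - 2 μ r - x`, i.e. that
`F(x) = x (P² - Q²) - 2 μ P Q` is negative. Differentiating under the integral sign and integrating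
by parts give `K_ν' = -(K_{ν+1} + K_{ν-1}) / 2` and `K_{ν+1} - K_{ν-1} = (2ν / x) K_ν`, from which
`F' = 2 μ P Q / x`. For `μ > 0` the function `F` is therefore strictly increasing, and it tends to
`0` because `K_ν` decays exponentially; hence `F < 0`. The symmetry `K_{-ν} = K_ν` turns `F` at `ν`
into `-F` at `-1 - ν`, which reverses the inequality for `μ < 0`, and for `μ = 0` both sides agree
because `K_{1/2} = K_{-1/2}`. The theorem is the case `x = δγ`, multiplied by `β / γ²`.
-/

open Real MeasureTheory

/-- Modified Bessel function of the second kind. -/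
noncomputable def besselK (ν x : ℝ) : ℝ :=
  ∫ t in Set.Ioi (0:ℝ), Real.exp (-x * Real.cosh t) * Real.cosh (ν * t)

open Set Filter Topology

namespace Real

lemma cosh_le_exp_abs (y : ℝ) : cosh y ≤ exp |y| := by
  rw [cosh_eq]
  linarith [exp_le_exp.2 (le_abs_self y), exp_le_exp.2 (neg_le_abs y)]

lemma abs_sinh_le_cosh (y : ℝ) : |sinh y| ≤ cosh y := by
  rw [abs_sinh, ← cosh_abs]
  exact (sinh_lt_cosh _).le

lemma cosh_mul_cosh_mul (ν t : ℝ) :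
    cosh t * cosh (ν * t) = (cosh ((ν + 1) * t) + cosh ((ν - 1) * t)) / 2 := by
  rw [add_mul, sub_mul, one_mul, cosh_add, cosh_sub]
  ring

lemma sinh_mul_sinh_mul (ν t : ℝ) :
    sinh t * sinh (ν * t) = (cosh ((ν + 1) * t) - cosh ((ν - 1) * t)) / 2 := by
  rw [add_mul, sub_mul, one_mul, cosh_add, cosh_sub]
  ring

end Real

lemma StrictMonoOn.lt_of_tendsto_atTop {α β : Type*} [LinearOrder α] [NoMaxOrder α]
    [TopologicalSpace β] [Preorder β] [ClosedIciTopology β] {f : α → β} {a x : α} {l : β}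
    (hf : StrictMonoOn f (Ioi a)) (hl : Tendsto f atTop (𝓝 l)) (hx : a < x) : f x < l := by
  have : Nonempty α := ⟨x⟩
  obtain ⟨y, hxy⟩ := exists_gt x
  refine (hf hx (hx.trans hxy) hxy).trans_le (ge_of_tendsto hl ?_)
  filter_upwards [eventually_ge_atTop y] with z hz
  exact hf.monotoneOn (hx.trans hxy) (mem_Ioi.2 ((hx.trans hxy).trans_le hz)) hz

/-- `x cosh t ≥ x t² / 4` beats every linear exponent. -/
lemma exp_neg_mul_cosh_mul_cosh_le {x : ℝ} (hx : 0 < x) (ν : ℝ) {t : ℝ} (ht : 0 ≤ t) :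
    exp (-x * cosh t) * cosh (ν * t) ≤ exp ((|ν| + 1) ^ 2 / x) * exp (-t) := by
  have hcosh : t ^ 2 / 4 ≤ cosh t := by
    rw [cosh_eq]
    nlinarith [quadratic_le_exp_of_nonneg ht, exp_pos (-t)]
  have hquad : (|ν| + 1) * t - x * (t ^ 2 / 4) ≤ (|ν| + 1) ^ 2 / x := by
    rw [le_div_iff₀ hx]
    nlinarith [sq_nonneg (x * t / 2 - (|ν| + 1))]
  calc exp (-x * cosh t) * cosh (ν * t) ≤ exp (-x * cosh t) * exp (|ν| * t) := by
        gcongr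
        simpa [abs_mul, abs_of_nonneg ht] using cosh_le_exp_abs (ν * t)
    _ ≤ exp ((|ν| + 1) ^ 2 / x) * exp (-t) := by
        rw [← exp_add, ← exp_add, exp_le_exp]
        nlinarith [mul_le_mul_of_nonneg_left hcosh hx.le]

lemma integrableOn_besselK_integrand {x : ℝ} (hx : 0 < x) (ν : ℝ) :
    IntegrableOn (fun t => exp (-x * cosh t) * cosh (ν * t)) (Ioi 0) := by
  refine Integrable.mono' ((exp_neg_integrableOn_Ioi 0 one_pos).const_mul
    (exp ((|ν| + 1) ^ 2 / x))) (by fun_prop) ?_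
  filter_upwards [ae_restrict_mem measurableSet_Ioi] with t ht
  rw [norm_of_nonneg (by positivity), neg_one_mul]
  exact exp_neg_mul_cosh_mul_cosh_le hx ν (le_of_lt ht)

lemma besselK_pos {x : ℝ} (hx : 0 < x) (ν : ℝ) : 0 < besselK ν x := by
  rw [besselK, setIntegral_pos_iff_support_of_nonneg_ae (Eventually.of_forall
    fun t => by positivity) (integrableOn_besselK_integrand hx ν)]
  have : Function.support (fun t => exp (-x * cosh t) * cosh (ν * t)) = univ :=
    Function.support_eq_univ fun t => by positivity
  rw [this, univ_inter]
  simp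

lemma besselK_neg (ν x : ℝ) : besselK (-ν) x = besselK ν x := by
  simp only [besselK, neg_mul, cosh_neg]

lemma hasDerivAt_besselK {x : ℝ} (hx : 0 < x) (ν : ℝ) :
    HasDerivAt (besselK ν) (-(besselK (ν + 1) x + besselK (ν - 1) x) / 2) x := by
  have hsplit : ∀ y t, cosh t * (exp (-y * cosh t) * cosh (ν * t)) =
      (exp (-y * cosh t) * cosh ((ν + 1) * t) + exp (-y * cosh t) * cosh ((ν - 1) * t)) / 2 :=
    fun y t => by rw [mul_left_comm, cosh_mul_cosh_mul]; ring
  have hint : ∀ y, 0 < y →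
      IntegrableOn (fun t => cosh t * (exp (-y * cosh t) * cosh (ν * t))) (Ioi 0) := fun y hy => by
    simp_rw [hsplit]
    exact ((integrableOn_besselK_integrand hy _).add
      (integrableOn_besselK_integrand hy _)).div_const 2
  have hbound : ∀ t, ∀ y ∈ Ioi (x / 2),
      ‖-(cosh t * (exp (-y * cosh t) * cosh (ν * t)))‖ ≤
        cosh t * (exp (-(x / 2) * cosh t) * cosh (ν * t)) := fun t y hy => by
    rw [norm_neg, norm_of_nonneg (by positivity)]
    gcongr
    exact (mem_Ioi.1 hy).le
  have hdiff : ∀ t y, HasDerivAt (fun y => exp (-y * cosh t) * cosh (ν * t))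
      (-(cosh t * (exp (-y * cosh t) * cosh (ν * t)))) y := fun t y => by
    refine ((((hasDerivAt_neg y).mul_const (cosh t)).exp).mul_const (cosh (ν * t))).congr_deriv ?_
    ring
  obtain ⟨-, hderiv⟩ := hasDerivAt_integral_of_dominated_loc_of_deriv_le
    (μ := volume.restrict (Ioi 0))
    (F := fun y t => exp (-y * cosh t) * cosh (ν * t)) (Ioi_mem_nhds (half_lt_self hx))
    (Eventually.of_forall fun _ => by fun_prop) (integrableOn_besselK_integrand hx ν)
    (by fun_prop) (Eventually.of_forall hbound) (hint _ (half_pos hx))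
    (Eventually.of_forall fun t y _ => hdiff t y)
  refine hderiv.congr_deriv ?_
  simp_rw [integral_neg, hsplit]
  rw [integral_div, integral_add (integrableOn_besselK_integrand hx _)
    (integrableOn_besselK_integrand hx _), neg_div]
  rfl

/-- Integration by parts: `t ↦ exp (-x cosh t) sinh (ν t)` vanishes at `0` and at `∞`. -/
lemma besselK_add_one_sub_besselK_sub_one {x : ℝ} (hx : 0 < x) (ν : ℝ) :
    besselK (ν + 1) x - besselK (ν - 1) x = 2 * ν / x * besselK ν x := by
  set f : ℝ → ℝ → ℝ := fun μ t => exp (-x * cosh t) * cosh (μ * t)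
  set g : ℝ → ℝ := fun t => exp (-x * cosh t) * sinh (ν * t)
  have hderiv : ∀ t, HasDerivAt g (ν * f ν t - x / 2 * (f (ν + 1) t - f (ν - 1) t)) t := by
    intro t
    refine ((((hasDerivAt_cosh t).const_mul (-x)).exp).mul
      ((hasDerivAt_id' t).const_mul ν).sinh).congr_deriv ?_
    simp only [f]
    linear_combination (-x * exp (-x * cosh t)) * sinh_mul_sinh_mul ν t
  have hf : ∀ μ, IntegrableOn (f μ) (Ioi 0) := integrableOn_besselK_integrand hx
  have hsub : IntegrableOn (fun t => f (ν + 1) t - f (ν - 1) t) (Ioi 0) := (hf _).sub (hf _)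
  have hg'int : IntegrableOn (fun t => ν * f ν t - x / 2 * (f (ν + 1) t - f (ν - 1) t)) (Ioi 0) :=
    ((hf ν).const_mul ν).sub (hsub.const_mul _)
  have hgint : IntegrableOn g (Ioi 0) := by
    refine (hf ν).mono' (by fun_prop) (Eventually.of_forall fun t => ?_)
    rw [norm_mul, norm_of_nonneg (exp_pos _).le, Real.norm_eq_abs]
    exact mul_le_mul_of_nonneg_left (abs_sinh_le_cosh _) (exp_pos _).le
  have hibp := integral_Ioi_of_hasDerivAt_of_tendsto (hderiv 0).continuousAt.continuousWithinAt
    (fun t _ => hderiv t) hg'int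
    (tendsto_zero_of_hasDerivAt_of_integrableOn_Ioi (fun t _ => hderiv t) hg'int hgint)
  rw [integral_sub ((hf ν).const_mul ν) (hsub.const_mul _), integral_const_mul,
    integral_const_mul, integral_sub (hf _) (hf _)] at hibp
  simp only [g, mul_zero, sinh_zero, sub_zero] at hibp
  change ν * besselK ν x - x / 2 * (besselK (ν + 1) x - besselK (ν - 1) x) = 0 at hibp
  field_simp
  linarith

lemma besselK_le_exp_sub_mul_besselK {x y : ℝ} (hy : 0 < y) (hyx : y ≤ x) (ν : ℝ) :
    besselK ν x ≤ exp (y - x) * besselK ν y := by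
  rw [besselK, besselK, ← integral_const_mul]
  refine setIntegral_mono_on (integrableOn_besselK_integrand (hy.trans_le hyx) ν)
    ((integrableOn_besselK_integrand hy ν).const_mul _) measurableSet_Ioi fun t _ => ?_
  rw [← mul_assoc, ← exp_add]
  gcongr
  nlinarith [one_le_cosh t]

lemma tendsto_pow_mul_besselK_atTop (ν : ℝ) (n : ℕ) :
    Tendsto (fun x => x ^ n * besselK ν x) atTop (𝓝 0) := by
  have hlim : Tendsto (fun x => exp 1 * besselK ν 1 * (x ^ n * exp (-x))) atTop (𝓝 0) := by
    simpa using (tendsto_pow_mul_exp_neg_atTop_nhds_zero n).const_mul (exp 1 * besselK ν 1)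
  refine squeeze_zero' ?_ ?_ hlim
  · filter_upwards [eventually_gt_atTop 0] with x hx
    have := besselK_pos hx ν
    positivity
  · filter_upwards [eventually_ge_atTop 1] with x hx
    calc x ^ n * besselK ν x ≤ x ^ n * (exp (1 - x) * besselK ν 1) := by
          gcongr
          exact besselK_le_exp_sub_mul_besselK one_pos hx ν
      _ = exp 1 * besselK ν 1 * (x ^ n * exp (-x)) := by
          rw [sub_eq_add_neg, exp_add]
          ring

/-- Its sign is that of `x K_{ν+1}(x) - (ν + 1/2 + √((ν + 1/2)² + x²)) K_ν(x)`,
see `exists_pos_mul_sub_add_sqrt_eq`. -/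
noncomputable def besselKQuadratic (ν x : ℝ) : ℝ :=
  x * (besselK (ν + 1) x ^ 2 - besselK ν x ^ 2) - (2 * ν + 1) * (besselK (ν + 1) x * besselK ν x)

lemma besselKQuadratic_neg_one_sub (ν x : ℝ) :
    besselKQuadratic (-1 - ν) x = -besselKQuadratic ν x := by
  rw [besselKQuadratic, besselKQuadratic, show -1 - ν + 1 = -ν by ring,
    show -1 - ν = -(ν + 1) by ring, besselK_neg, besselK_neg]
  ring

lemma hasDerivAt_besselKQuadratic {x : ℝ} (hx : 0 < x) (ν : ℝ) :
    HasDerivAt (besselKQuadratic ν)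
      ((2 * ν + 1) * besselK (ν + 1) x * besselK ν x / x) x := by
  have hP := hasDerivAt_besselK hx (ν + 1)
  have hQ := hasDerivAt_besselK hx ν
  have hup := besselK_add_one_sub_besselK_sub_one hx (ν + 1)
  have hdown := besselK_add_one_sub_besselK_sub_one hx ν
  rw [add_sub_cancel_right] at hP hup
  refine (((hasDerivAt_id x).mul ((hP.pow 2).sub (hQ.pow 2))).sub
    ((hP.mul hQ).const_mul (2 * ν + 1))).congr_deriv ?_
  rw [show besselK (ν + 1 + 1) x = besselK ν x + 2 * (ν + 1) / x * besselK (ν + 1) x by linarith,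
    show besselK (ν - 1) x = besselK (ν + 1) x - 2 * ν / x * besselK ν x by linarith]
  simp only [id, Pi.sub_apply, Pi.pow_apply]
  field_simp
  ring

lemma tendsto_besselKQuadratic_atTop (ν : ℝ) :
    Tendsto (besselKQuadratic ν) atTop (𝓝 0) := by
  have h0 : ∀ μ, Tendsto (besselK μ) atTop (𝓝 0) := fun μ => by
    simpa using tendsto_pow_mul_besselK_atTop μ 0
  have h1 : ∀ μ, Tendsto (fun x => x * besselK μ x) atTop (𝓝 0) := fun μ => by
    simpa using tendsto_pow_mul_besselK_atTop μ 1
  have := (((h1 (ν + 1)).mul (h0 (ν + 1))).sub ((h1 ν).mul (h0 ν))).sub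
    (((h0 (ν + 1)).mul (h0 ν)).const_mul (2 * ν + 1))
  simp only [mul_zero, sub_zero] at this
  refine this.congr fun x => ?_
  simp only [besselKQuadratic]
  ring

lemma besselKQuadratic_neg {ν x : ℝ} (hν : -(1 / 2) < ν) (hx : 0 < x) :
    besselKQuadratic ν x < 0 := by
  have hmono : StrictMonoOn (besselKQuadratic ν) (Ioi 0) := by
    refine strictMonoOn_of_deriv_pos (convex_Ioi 0)
      (fun y hy => (hasDerivAt_besselKQuadratic hy ν).continuousAt.continuousWithinAt)
      fun y hy => ?_
    rw [interior_Ioi] at hy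
    rw [(hasDerivAt_besselKQuadratic hy ν).deriv]
    exact div_pos (mul_pos (mul_pos (by linarith) (besselK_pos hy _)) (besselK_pos hy _)) hy
  exact hmono.lt_of_tendsto_atTop (tendsto_besselKQuadratic_atTop ν) hx

lemma besselKQuadratic_pos {ν x : ℝ} (hν : ν < -(1 / 2)) (hx : 0 < x) :
    0 < besselKQuadratic ν x := by
  have := besselKQuadratic_neg (ν := -1 - ν) (by linarith) hx
  rw [besselKQuadratic_neg_one_sub] at this
  linarith

/-- `x r² - 2 μ r - x` has the roots `(μ ± √(μ² + x²)) / x`, of which only the larger is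
positive. -/
lemma exists_pos_mul_sub_add_sqrt_eq {x P Q : ℝ} (μ : ℝ) (hx : 0 < x) (hP : 0 < P) (hQ : 0 < Q) :
    ∃ c > 0, x * P - (μ + √(μ ^ 2 + x ^ 2)) * Q = c * (x * (P ^ 2 - Q ^ 2) - 2 * μ * (P * Q)) := by
  set s := √(μ ^ 2 + x ^ 2)
  have hs2 : s ^ 2 = μ ^ 2 + x ^ 2 := sq_sqrt (by positivity)
  have hμs : μ < s := by nlinarith [sqrt_nonneg (μ ^ 2 + x ^ 2)]
  have hroot : 0 < x * P - (μ - s) * Q := by nlinarith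
  refine ⟨x / (x * P - (μ - s) * Q), div_pos hx hroot, ?_⟩
  rw [div_mul_eq_mul_div, eq_div_iff hroot.ne']
  linear_combination (-Q ^ 2) * hs2

lemma mul_besselK_add_one_lt {ν x : ℝ} (hν : -(1 / 2) < ν) (hx : 0 < x) :
    x * besselK (ν + 1) x < (ν + 1 / 2 + √((ν + 1 / 2) ^ 2 + x ^ 2)) * besselK ν x := by
  obtain ⟨c, hc, h⟩ := exists_pos_mul_sub_add_sqrt_eq (ν + 1 / 2) hx
    (besselK_pos hx (ν + 1)) (besselK_pos hx ν)
  have hneg := mul_neg_of_pos_of_neg hc (besselKQuadratic_neg hν hx)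
  rw [besselKQuadratic, ← show 2 * (ν + 1 / 2) = 2 * ν + 1 by ring] at hneg
  linarith

lemma mul_besselK_add_one_gt {ν x : ℝ} (hν : ν < -(1 / 2)) (hx : 0 < x) :
    (ν + 1 / 2 + √((ν + 1 / 2) ^ 2 + x ^ 2)) * besselK ν x < x * besselK (ν + 1) x := by
  obtain ⟨c, hc, h⟩ := exists_pos_mul_sub_add_sqrt_eq (ν + 1 / 2) hx
    (besselK_pos hx (ν + 1)) (besselK_pos hx ν)
  have hpos := mul_pos hc (besselKQuadratic_pos hν hx)
  rw [besselKQuadratic, ← show 2 * (ν + 1 / 2) = 2 * ν + 1 by ring] at hpos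
  linarith

theorem stmt_6_general (lam α β δ γ : ℝ) (hβ : 0 < β) (hβα : β < α) (hδ : 0 < δ)
    (hγ : γ = Real.sqrt (α ^ 2 - β ^ 2)) :
    (-(1 / 2) < lam → δ * β * besselK (lam + 1) (δ * γ) / (γ * besselK lam (δ * γ)) <
      β / γ ^ 2 * (lam + 1 / 2 + Real.sqrt ((lam + 1 / 2) ^ 2 + δ ^ 2 * γ ^ 2))) ∧
    (lam = -(1 / 2) → δ * β * besselK (lam + 1) (δ * γ) / (γ * besselK lam (δ * γ)) =
      β / γ ^ 2 * (lam + 1 / 2 + Real.sqrt ((lam + 1 / 2) ^ 2 + δ ^ 2 * γ ^ 2))) ∧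
    (lam < -(1 / 2) → δ * β * besselK (lam + 1) (δ * γ) / (γ * besselK lam (δ * γ)) >
      β / γ ^ 2 * (lam + 1 / 2 + Real.sqrt ((lam + 1 / 2) ^ 2 + δ ^ 2 * γ ^ 2))) := by
  have hγ0 : 0 < γ := hγ ▸ sqrt_pos.2 (by nlinarith)
  have hx : 0 < δ * γ := mul_pos hδ hγ0
  have hlhs : δ * β * besselK (lam + 1) (δ * γ) / (γ * besselK lam (δ * γ)) =
      β / γ ^ 2 * (δ * γ * besselK (lam + 1) (δ * γ) / besselK lam (δ * γ)) := by
    have := (besselK_pos hx lam).ne'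
    field_simp
  have hx2 : (lam + 1 / 2) ^ 2 + δ ^ 2 * γ ^ 2 = (lam + 1 / 2) ^ 2 + (δ * γ) ^ 2 := by ring
  rw [hlhs, hx2, gt_iff_lt]
  refine ⟨fun h => ?_, fun h => ?_, fun h => ?_⟩
  · gcongr
    exact (div_lt_iff₀ (besselK_pos hx lam)).2 (mul_besselK_add_one_lt h hx)
  · subst h
    have := (besselK_pos hx (1 / 2)).ne'
    rw [show -(1 / 2) + 1 = (1 / 2 : ℝ) by norm_num, besselK_neg]
    norm_num [sqrt_sq hx.le, this]
  · gcongr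
    exact (lt_div_iff₀ (besselK_pos hx lam)).2 (mul_besselK_add_one_gt h hx)

theorem stmt_6 (lam α β δ γ : ℝ) (hα : 0 < α) (hβ : 0 < β) (hβα : β < α) (hδ : 0 < δ)
    (hγ : γ = Real.sqrt (α ^ 2 - β ^ 2)) :
    (-(1 / 2) < lam → δ * β * besselK (lam + 1) (δ * γ) / (γ * besselK lam (δ * γ)) <
      β / γ ^ 2 * (lam + 1 / 2 + Real.sqrt ((lam + 1 / 2) ^ 2 + δ ^ 2 * γ ^ 2))) ∧
    (lam = -(1 / 2) → δ * β * besselK (lam + 1) (δ * γ) / (γ * besselK lam (δ * γ)) =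
      β / γ ^ 2 * (lam + 1 / 2 + Real.sqrt ((lam + 1 / 2) ^ 2 + δ ^ 2 * γ ^ 2))) ∧
    (lam < -(1 / 2) → δ * β * besselK (lam + 1) (δ * γ) / (γ * besselK lam (δ * γ)) >
      β / γ ^ 2 * (lam + 1 / 2 + Real.sqrt ((lam + 1 / 2) ^ 2 + δ ^ 2 * γ ^ 2))) :=
  stmt_6_general lam α β δ γ hβ hβα hδ hγ
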